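/- arXiv:1507.06843 — 4 statements merged into one kernel-verified Lean document; each statement's English description precedes it below -/
import Mathlib

section
/- Let 0 < k ≤ n, let y ∈ S_n be a symmetric matrix whose lower-right (n−k)×(n−k) principal submatrix is positive definite, and let A be a k×k positive definite matrix. Set x = [[A, 0], [0, 0]] ∈ S_n. Then there exists α₀ > 0 such that for all α ≥ α₀ the matrix y + α x is positive definite. -/
open Matrix

attribute [local instance] Matrix.frobeniusNormedAddCommGroup

noncomputable section

abbrev MS (n : ℕ) := Matrix (Fin n) (Fin n) ℝ

/-- The principal submatrix of `x` with rows and columns in `[a, b)`; for `a = 0`,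
`b = k` it is `π_k(x)`, the upper-left `k×k` principal submatrix, and for `a = k`,
`b = n` it is `π̄_k(x)`, the lower-right `(n−k)×(n−k)` principal submatrix. -/
def blk (n a b : ℕ) (x : MS n) : Matrix (Fin (b - a)) (Fin (b - a)) ℝ :=
  fun i j => if h : a + i.1 < n ∧ a + j.1 < n then x ⟨a + i.1, h.1⟩ ⟨a + j.1, h.2⟩ else 0

/-!
Reorder the indices so that `y + α • x` becomes the block matrix `[[α A + Y, B], [Bᴴ, D]]`
with `D` the positive definite lower-right block of `y`. By the Schur complement it is positive
definite as soon as `α A + (Y - B D⁻¹ Bᴴ)` is. The spectra of `A` and of the Hermitian matrix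
`M = Y - B D⁻¹ Bᴴ` are finite, so `r • 1 ≤ A` for some `r > 0` and `c • 1 ≤ M` for some `c`;
hence `α A + M ≥ (α r + c) • 1 > 0` once `α > -c / r`.
-/

open Filter Topology

namespace Matrix

open scoped MatrixOrder ComplexOrder

variable {ι κ 𝕜 : Type*} [Fintype ι] [DecidableEq ι] [Fintype κ] [DecidableEq κ] [RCLike 𝕜]

lemma IsHermitian.exists_algebraMap_le {M : Matrix ι ι 𝕜} (hM : M.IsHermitian) :
    ∃ c : ℝ, algebraMap ℝ _ c ≤ M := by
  obtain ⟨c, hc⟩ := M.finite_real_spectrum.bddBelow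
  exact ⟨c, algebraMap_le_of_le_spectrum (fun x hx => hc hx) hM⟩

lemma PosDef.exists_pos_algebraMap_le {A : Matrix ι ι 𝕜} (hA : A.PosDef) :
    ∃ r : ℝ, 0 < r ∧ algebraMap ℝ _ r ≤ A := by
  have hsmall : ∀ᶠ r in 𝓝[>] (0 : ℝ), ∀ x ∈ spectrum ℝ A, r ≤ x :=
    (A.finite_real_spectrum.eventually_all).2 fun x hx =>
      (tendsto_nhdsWithin_of_tendsto_nhds tendsto_id).eventually
        (eventually_le_nhds ((isStrictlyPositive_iff_posDef.2 hA).spectrum_pos hx))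
  obtain ⟨r, hrA, hr⟩ := (hsmall.and self_mem_nhdsWithin).exists
  exact ⟨r, hr, algebraMap_le_of_le_spectrum hrA hA.isHermitian⟩

lemma PosDef.eventually_smul_add {A M : Matrix ι ι 𝕜} (hA : A.PosDef) (hM : M.IsHermitian) :
    ∀ᶠ α : ℝ in atTop, (α • A + M).PosDef := by
  obtain ⟨r, hr, hrA⟩ := hA.exists_pos_algebraMap_le
  obtain ⟨c, hcM⟩ := hM.exists_algebraMap_le
  filter_upwards [eventually_ge_atTop 0, eventually_gt_atTop (-c / r)] with α hα₀ hα
  have hscalar : (algebraMap ℝ (Matrix ι ι 𝕜) (α * r + c)).PosDef := by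
    rw [← isStrictlyPositive_iff_posDef]
    refine isStrictlyPositive_algebraMap ?_
    rw [div_lt_iff₀ hr] at hα
    linarith
  have hgap : (α • A + M - algebraMap ℝ _ (α * r + c)).PosSemidef := by
    have hsplit : α • A + M - algebraMap ℝ _ (α * r + c) =
        α • (A - algebraMap ℝ _ r) + (M - algebraMap ℝ _ c) := by
      simp only [Algebra.algebraMap_eq_smul_one]
      module
    rw [hsplit]
    exact ((le_iff.1 hrA).smul hα₀).add (le_iff.1 hcM)
  simpa using hscalar.add_posSemidef hgap

lemma posDef_fromBlocks₂₂_iff (A : Matrix ι ι 𝕜) (B : Matrix ι κ 𝕜) {D : Matrix κ κ 𝕜}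
    (hD : D.PosDef) : (fromBlocks A B Bᴴ D).PosDef ↔ (A - B * D⁻¹ * Bᴴ).PosDef := by
  have := hD.isUnit.invertible
  have hdet : (fromBlocks A B Bᴴ D).det = D.det * (A - B * D⁻¹ * Bᴴ).det := by
    rw [det_fromBlocks₂₂, invOf_eq_nonsing_inv]
  constructor
  · intro h
    refine ((PosDef.fromBlocks₂₂ A B hD).1 h.posSemidef).posDef_iff_det_ne_zero.2 ?_
    exact right_ne_zero_of_mul (hdet ▸ h.det_pos.ne')
  · intro h
    refine ((PosDef.fromBlocks₂₂ A B hD).2 h.posSemidef).posDef_iff_det_ne_zero.2 ?_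
    rw [hdet]
    exact mul_ne_zero hD.det_pos.ne' h.det_pos.ne'

lemma eventually_posDef_fromBlocks_smul_add {A Y : Matrix ι ι 𝕜} (B : Matrix ι κ 𝕜)
    {D : Matrix κ κ 𝕜} (hA : A.PosDef) (hY : Y.IsHermitian) (hD : D.PosDef) :
    ∀ᶠ α : ℝ in atTop, (fromBlocks (α • A + Y) B Bᴴ D).PosDef := by
  have hS : (Y - B * D⁻¹ * Bᴴ).IsHermitian :=
    hY.sub (isHermitian_mul_mul_conjTranspose B hD.isHermitian.inv)
  filter_upwards [hA.eventually_smul_add hS] with α hα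
  rwa [posDef_fromBlocks₂₂_iff _ B hD, add_sub_assoc]

end Matrix

def finSplitAt {n k : ℕ} (h : k ≤ n) : Fin n ≃ Fin k ⊕ Fin (n - k) :=
  (finCongr (Nat.add_sub_cancel' h).symm).trans finSumFinEquiv.symm

section blk

variable {n k : ℕ}

lemma toBlocks₁₁_reindex_finSplitAt (hkn : k ≤ n) (z : MS n) :
    (reindex (finSplitAt hkn) (finSplitAt hkn) z).toBlocks₁₁ = blk n 0 k z := by
  ext i j
  simp only [toBlocks₁₁, reindex_apply, submatrix_apply, of_apply, blk]
  rw [dif_pos (by omega)]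
  congr 1 <;> ext <;> simp [finSplitAt]

lemma toBlocks₂₂_reindex_finSplitAt (hkn : k ≤ n) (z : MS n) :
    (reindex (finSplitAt hkn) (finSplitAt hkn) z).toBlocks₂₂ = blk n k n z := by
  ext i j
  simp only [toBlocks₂₂, reindex_apply, submatrix_apply, of_apply, blk]
  rw [dif_pos (by omega)]
  congr 1

lemma exists_reindex_finSplitAt_eq_fromBlocks (hkn : k ≤ n) {z : MS n} (hz : z.IsSymm) :
    ∃ B, reindex (finSplitAt hkn) (finSplitAt hkn) z =
      fromBlocks (blk n 0 k z) B Bᴴ (blk n k n z) := by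
  set Z := reindex (finSplitAt hkn) (finSplitAt hkn) z
  have hZ : (fromBlocks Z.toBlocks₁₁ Z.toBlocks₁₂ Z.toBlocks₂₁ Z.toBlocks₂₂).IsHermitian := by
    rw [fromBlocks_toBlocks]
    exact (isHermitian_iff_isSymm.2 hz).reindex _
  refine ⟨Z.toBlocks₁₂, ?_⟩
  rw [← toBlocks₁₁_reindex_finSplitAt hkn, ← toBlocks₂₂_reindex_finSplitAt hkn,
    (isHermitian_fromBlocks_iff.1 hZ).2.1, fromBlocks_toBlocks]

lemma reindex_finSplitAt_eq_fromBlocks_zero (hkn : k ≤ n) {z : MS n}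
    (hz : ∀ i j : Fin n, (k ≤ i.1 ∨ k ≤ j.1) → z i j = 0) :
    reindex (finSplitAt hkn) (finSplitAt hkn) z = fromBlocks (blk n 0 k z) 0 0 0 := by
  rw [← toBlocks₁₁_reindex_finSplitAt hkn]
  ext (i | i) (j | j)
  · rfl
  all_goals exact hz _ _ (by simp [finSplitAt])

lemma eventually_posDef_add_smul (hkn : k ≤ n) {y x : MS n} (hy : y.IsSymm)
    (hyblk : (blk n k n y).PosDef) (hxA : (blk n 0 k x).PosDef)
    (hx0 : ∀ i j : Fin n, (k ≤ i.1 ∨ k ≤ j.1) → x i j = 0) :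
    ∀ᶠ α : ℝ in atTop, (y + α • x).PosDef := by
  obtain ⟨B, hyB⟩ := exists_reindex_finSplitAt_eq_fromBlocks hkn hy
  have hY : (blk n 0 k y).IsHermitian :=
    (isHermitian_fromBlocks_iff.1 (hyB ▸ (isHermitian_iff_isSymm.2 hy).reindex _)).1
  filter_upwards [eventually_posDef_fromBlocks_smul_add B hxA hY hyblk] with α hα
  have hblocks : reindex (finSplitAt hkn) (finSplitAt hkn) (y + α • x) =
      fromBlocks (α • blk n 0 k x + blk n 0 k y) B Bᴴ (blk n k n y) := by
    change reindex _ _ y + α • reindex _ _ x = _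
    rw [hyB, reindex_finSplitAt_eq_fromBlocks_zero hkn hx0, fromBlocks_smul, fromBlocks_add]
    simp [add_comm]
  rw [← hblocks] at hα
  simpa using hα.submatrix (finSplitAt hkn).injective

end blk

theorem stmt8_general (n k : ℕ) (hkn : k ≤ n)
    (y : MS n) (hy : y.IsSymm) (hyblk : (blk n k n y).PosDef)
    (x : MS n) (hxA : (blk n 0 k x).PosDef)
    (hx0 : ∀ i j : Fin n, (k ≤ i.1 ∨ k ≤ j.1) → x i j = 0) :
    ∃ α₀ : ℝ, 0 < α₀ ∧ ∀ α : ℝ, α₀ ≤ α → (y + α • x).PosDef := by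
  obtain ⟨a, ha⟩ := eventually_atTop.1 (eventually_posDef_add_smul hkn hy hyblk hxA hx0)
  exact ⟨max a 1, by positivity, fun α hα => ha α (le_of_max_le_left hα)⟩

/-- Let `0 < k ≤ n`, let `y` be a symmetric `n×n` matrix whose lower-right
`(n−k)×(n−k)` principal submatrix is positive definite, and let
`x = [[A, 0], [0, 0]]` with `A` a `k×k` positive definite matrix. Then there
exists `α₀ > 0` such that `y + α x` is positive definite for all `α ≥ α₀`. -/
theorem stmt8 (n k : ℕ) (hk : 0 < k) (hkn : k ≤ n)
    (y : MS n) (hy : y.IsSymm) (hyblk : (blk n k n y).PosDef)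
    (x : MS n) (hxA : (blk n 0 k x).PosDef)
    (hx0 : ∀ i j : Fin n, (k ≤ i.1 ∨ k ≤ j.1) → x i j = 0) :
    ∃ α₀ : ℝ, 0 < α₀ ∧ ∀ α : ℝ, α₀ ≤ α → (y + α • x).PosDef :=
  stmt8_general n k hkn y hy hyblk x hxA hx0
end
end

section
/- Let L ⊆ S_n be a linear subspace and c ∈ S_n. Let k₁,…,k_m be positive integers with N_i = k₁+⋯+k_i, N_m ≤ n (set N₀ = 0), and suppose A₁,…,A_m ∈ L have the staircase shape: for each i, the lower-right (n−N_{i−1})×(n−N_{i−1}) principal submatrix of A_i equals [[Â_i, 0],[0, 0]] for some k_i×k_i positive definite matrix Â_i. Suppose moreover that the partition is maximal, i.e. the only positive semidefinite matrix in π̄_{N_m}(L) is the zero matrix. Then (K_n,L,c) is in weak status (weakly feasible or weakly infeasible) if and only if the subproblem (K_{n−N_m}, π̄_{N_m}(L), π̄_{N_m}(c)) is weakly feasible. -/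
open Matrix

attribute [local instance] Matrix.frobeniusNormedAddCommGroup

noncomputable section

def PSD (n : ℕ) : Set (MS n) := {x | x.PosSemidef}

def affSet {n : ℕ} (L : Submodule ℝ (MS n)) (c : MS n) : Set (MS n) :=
  {x | ∃ l ∈ L, x = l + c}

/-- `dist(C, D) = inf {‖x − y‖ : x ∈ C, y ∈ D}` in the Frobenius norm. -/
def sdist {m : ℕ} (C D : Set (MS m)) : ℝ := sInf (Set.image2 dist C D)

/-- The problem with affine feasible set `D` is in weak status: weakly feasible
(`D` contains a positive semidefinite but no positive definite matrix), or weakly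
infeasible (`D ∩ K_m = ∅` and `dist(K_m, D) = 0`). -/
def weakStatus {m : ℕ} (D : Set (MS m)) : Prop :=
  ((∃ u ∈ D, u.PosSemidef) ∧ ¬ ∃ u ∈ D, u.PosDef) ∨
    ((¬ ∃ u ∈ D, u.PosSemidef) ∧ sdist (PSD m) D = 0)

/-- The problem with affine feasible set `D` is weakly feasible: `D` contains a
positive semidefinite but no positive definite matrix. -/
def weaklyFeasible {m : ℕ} (D : Set (MS m)) : Prop :=
  (∃ u ∈ D, u.PosSemidef) ∧ ¬ ∃ u ∈ D, u.PosDef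

/-- `x` has the staircase block form: its lower-right `(n−a)×(n−a)` principal
submatrix equals `[[Â, 0], [0, 0]]` where `Â`, occupying rows/columns `[a, b)`,
is positive definite. -/
def staircase (n a b : ℕ) (x : MS n) : Prop :=
  (blk n a b x).PosDef ∧
    ∀ i j : Fin n, a ≤ i.1 → a ≤ j.1 → (b ≤ i.1 ∨ b ≤ j.1) → x i j = 0

/-!
Weak status of `D = L + c` means that `dist(K, D) = 0` while `D` has no positive definite point.
Both properties pass between `π̄_j(D)` and `π̄_{j'}(D)` when `L` contains a staircase matrix `a`
with block `[j, j')`. Downwards this is restriction to a principal submatrix. Upwards it is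
Finsler's lemma: `π̄_j(a) ⪰ 0` and its null vectors vanish on the block, so `π̄_j(x + t a) ≻ 0`
for large `t` as soon as `π̄_{j'}(x) ≻ 0`; applied to `x` perturbed by a small matrix supported
in the lower corner, this also lifts near-feasible points. Iterating over the partition reduces
everything to `π̄_{N_m}(D)`. There maximality says that the subspace meets the cone only in `0`,
so the distance to the cone grows linearly along it; by compactness distance zero is attained,
and weak status becomes weak feasibility.
-/

attribute [local instance] Matrix.frobeniusNormedSpace

open scoped Pointwise

theorem sdist_eq_zero_iff {m : ℕ} {C D : Set (MS m)} (hC : C.Nonempty) (hD : D.Nonempty) :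
    sdist C D = 0 ↔ ∀ ε > 0, ∃ u ∈ C, ∃ v ∈ D, dist u v < ε := by
  have hbdd : BddBelow (Set.image2 dist C D) := ⟨0, by rintro _ ⟨u, -, v, -, rfl⟩; positivity⟩
  constructor
  · intro h ε hε
    obtain ⟨_, ⟨u, hu, v, hv, rfl⟩, huv⟩ :=
      exists_lt_of_csInf_lt (hC.image2 hD) (h ▸ hε : sdist C D < ε)
    exact ⟨u, hu, v, hv, huv⟩
  · intro h
    refine le_antisymm (le_of_forall_pos_le_add fun ε hε => ?_)
      (Real.sInf_nonneg (by rintro _ ⟨u, -, v, -, rfl⟩; positivity))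
    obtain ⟨u, hu, v, hv, huv⟩ := h ε hε
    exact (csInf_le hbdd (Set.mem_image2_of_mem hu hv)).trans (by linarith)

theorem weakStatus_iff {m : ℕ} {D : Set (MS m)} :
    weakStatus D ↔ sdist (PSD m) D = 0 ∧ ¬ ∃ u ∈ D, u.PosDef := by
  have hfeas : (∃ u ∈ D, u.PosSemidef) → sdist (PSD m) D = 0 := by
    rintro ⟨u, hu, hpsd⟩
    exact (sdist_eq_zero_iff ⟨u, hpsd⟩ ⟨u, hu⟩).2 fun ε hε => ⟨u, hpsd, u, hu, by simpa using hε⟩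
  constructor
  · rintro (⟨hF, hP⟩ | ⟨hF, hZ⟩)
    · exact ⟨hfeas hF, hP⟩
    · exact ⟨hZ, fun ⟨u, hu, hpd⟩ => hF ⟨u, hu, hpd.posSemidef⟩⟩
  · rintro ⟨hZ, hP⟩
    by_cases hF : ∃ u ∈ D, u.PosSemidef
    exacts [Or.inl ⟨hF, hP⟩, Or.inr ⟨hF, hZ⟩]

section AffSet

variable {n : ℕ} {L : Submodule ℝ (MS n)} {c : MS n}

theorem affSet_nonempty : (affSet L c).Nonempty :=
  ⟨c, 0, L.zero_mem, (zero_add c).symm⟩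

theorem isSymm_of_mem_affSet (hL : ∀ y ∈ L, y.IsSymm) (hc : c.IsSymm) {x : MS n}
    (hx : x ∈ affSet L c) : x.IsSymm := by
  obtain ⟨l, hl, rfl⟩ := hx
  exact (hL l hl).add hc

theorem add_smul_mem_affSet {a x : MS n} (ha : a ∈ L) (hx : x ∈ affSet L c) (t : ℝ) :
    x + t • a ∈ affSet L c := by
  obtain ⟨l, hl, rfl⟩ := hx
  exact ⟨l + t • a, L.add_mem hl (L.smul_mem t ha), by abel⟩

end AffSet

section Quadratic

variable {ι κ : Type*} [Fintype ι] [Fintype κ]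

theorem dotProduct_mulVec_submatrix {R : Type*} [CommSemiring R] {f : ι → κ}
    (hf : Function.Injective f) {M : Matrix κ κ R} {v : κ → R}
    (h : ∀ i k, (i ∉ Set.range f ∨ k ∉ Set.range f) → v i * M i k * v k = 0) :
    (v ∘ f) ⬝ᵥ M.submatrix f f *ᵥ (v ∘ f) = v ⬝ᵥ M *ᵥ v := by
  simp only [dotProduct, mulVec, Finset.mul_sum, Function.comp_apply, submatrix_apply,
    ← mul_assoc]
  refine Fintype.sum_of_injective f hf _ _
    (fun i hi => Finset.sum_eq_zero fun k _ => h i k (Or.inl hi)) fun a => ?_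
  exact Fintype.sum_of_injective f hf _ _ (fun k hk => h _ k (Or.inr hk)) fun _ => rfl

theorem dotProduct_mulVec_smul_self (M : Matrix κ κ ℝ) (c : ℝ) (v : κ → ℝ) :
    (c • v) ⬝ᵥ M *ᵥ (c • v) = c ^ 2 * (v ⬝ᵥ M *ᵥ v) := by
  simp only [mulVec_smul, dotProduct_smul, smul_dotProduct, smul_eq_mul]
  ring

/-- Finsler's lemma. -/
theorem exists_posDef_add_smul {y a : Matrix κ κ ℝ} (hy : y.IsHermitian) (ha : a.PosSemidef)
    (h : ∀ v ≠ 0, v ⬝ᵥ a *ᵥ v = 0 → 0 < v ⬝ᵥ y *ᵥ v) : ∃ t : ℝ, (y + t • a).PosDef := by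
  have hquad (t : ℝ) (v : κ → ℝ) :
      v ⬝ᵥ (y + t • a) *ᵥ v = v ⬝ᵥ y *ᵥ v + t * (v ⬝ᵥ a *ᵥ v) := by
    simp [add_mulVec, smul_mulVec, dotProduct_add]
  have ha₀ (v : κ → ℝ) : 0 ≤ v ⬝ᵥ a *ᵥ v := by simpa using ha.dotProduct_mulVec_nonneg v
  -- The sets `U t` increase with `t` and cover the unit sphere, so one of them contains it.
  let U (t : ℕ) : Set (κ → ℝ) := {v | 0 < v ⬝ᵥ y *ᵥ v + t * (v ⬝ᵥ a *ᵥ v)}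
  obtain ⟨t, ht⟩ : ∃ t, Metric.sphere (0 : κ → ℝ) 1 ⊆ U t := by
    refine (isCompact_sphere 0 1).elim_directed_cover U
      (fun t => isOpen_lt continuous_const (by fun_prop)) ?_ ?_
    · intro v hv
      have hv₀ : v ≠ 0 := fun h₀ => by simp [h₀] at hv
      rcases (ha₀ v).eq_or_lt with hva | hva
      · exact Set.mem_iUnion.2 ⟨0, by simpa [U] using h v hv₀ hva.symm⟩
      · obtain ⟨t, ht⟩ := exists_nat_gt (-(v ⬝ᵥ y *ᵥ v) / (v ⬝ᵥ a *ᵥ v))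
        rw [div_lt_iff₀ hva] at ht
        exact Set.mem_iUnion.2 ⟨t, by simp only [U, Set.mem_ofPred_eq]; linarith⟩
    · refine Monotone.directed_le fun s t hst v hv => ?_
      simp only [U, Set.mem_ofPred_eq] at hv ⊢
      nlinarith [ha₀ v, (Nat.cast_le (α := ℝ)).2 hst]
  refine ⟨t, .of_dotProduct_mulVec_pos (hy.add (ha.1.smul (.all _))) fun v hv => ?_⟩
  have hw : ‖v‖⁻¹ • v ∈ Metric.sphere (0 : κ → ℝ) 1 := by simp [norm_smul, hv]
  have hpos : 0 < (‖v‖⁻¹ • v) ⬝ᵥ (y + (t : ℝ) • a) *ᵥ (‖v‖⁻¹ • v) := by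
    rw [hquad]; exact ht hw
  rw [dotProduct_mulVec_smul_self] at hpos
  simpa using pos_of_mul_pos_right hpos (by positivity)

theorem exists_posDef_add_smul_of_posDef_submatrix {g : ι → κ} {y a : Matrix κ κ ℝ}
    (hy : y.IsHermitian) (ha : a.PosSemidef) (hg : Function.Injective g)
    (ha_ker : ∀ v, v ⬝ᵥ a *ᵥ v = 0 → ∀ i ∉ Set.range g, v i = 0)
    (hyg : (y.submatrix g g).PosDef) : ∃ t : ℝ, (y + t • a).PosDef := by
  refine exists_posDef_add_smul hy ha fun v hv hva => ?_
  have hsupp := ha_ker v hva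
  have hvg : v ∘ g ≠ 0 := by
    refine fun h₀ => hv (funext fun i => ?_)
    by_cases hi : i ∈ Set.range g
    · obtain ⟨b, rfl⟩ := hi
      exact congrFun h₀ b
    · exact hsupp i hi
  rw [← dotProduct_mulVec_submatrix hg fun i k hik => by
    rcases hik with hi | hk <;> simp [*]]
  simpa using hyg.dotProduct_mulVec_pos hvg

end Quadratic

section Submatrix

variable {ι κ α : Type*} {g : ι → κ}

/-- The matrix equal to `w` on `range g × range g` and to zero elsewhere. -/
def zeroExtend [Zero α] (g : ι → κ) (w : Matrix ι ι α) : Matrix κ κ α :=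
  fun i k => Function.extend g (fun b => Function.extend g (w b) 0 k) 0 i

theorem zeroExtend_apply_apply [Zero α] (hg : Function.Injective g) (w : Matrix ι ι α)
    (b c : ι) : zeroExtend g w (g b) (g c) = w b c := by
  simp [zeroExtend, hg.extend_apply]

theorem zeroExtend_apply_eq_zero [Zero α] (hg : Function.Injective g) (w : Matrix ι ι α)
    {i k : κ} (h : i ∉ Set.range g ∨ k ∉ Set.range g) : zeroExtend g w i k = 0 := by
  rcases h with hi | hk
  · simp [zeroExtend, Function.extend_apply' _ _ _ hi]
  · by_cases hi : i ∈ Set.range g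
    · obtain ⟨b, rfl⟩ := hi
      simp [zeroExtend, hg.extend_apply, Function.extend_apply' _ _ _ hk]
    · simp [zeroExtend, Function.extend_apply' _ _ _ hi]

theorem zeroExtend_submatrix [Zero α] (hg : Function.Injective g) (w : Matrix ι ι α) :
    (zeroExtend g w).submatrix g g = w := by
  ext b c
  exact zeroExtend_apply_apply hg w b c

theorem isHermitian_zeroExtend [AddMonoid α] [StarAddMonoid α] {w : Matrix ι ι α}
    (hw : w.IsHermitian) (hg : Function.Injective g) : (zeroExtend g w).IsHermitian := by
  refine IsHermitian.ext fun i k => ?_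
  by_cases hik : i ∈ Set.range g ∧ k ∈ Set.range g
  · obtain ⟨⟨b, rfl⟩, ⟨c, rfl⟩⟩ := hik
    simpa [zeroExtend_apply_apply hg] using hw.apply b c
  · rw [not_and_or] at hik
    rw [zeroExtend_apply_eq_zero hg w hik, zeroExtend_apply_eq_zero hg w hik.symm, star_zero]

theorem Finset.sum_comp_le_sum_of_injective [Fintype κ] [AddCommMonoid α] [PartialOrder α]
    [IsOrderedAddMonoid α] (hg : Function.Injective g) {F : κ → α} (hF : ∀ i, 0 ≤ F i)
    (s : Finset ι) : ∑ b ∈ s, F (g b) ≤ ∑ i, F i :=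
  (Finset.sum_map s ⟨g, hg⟩ F).symm.trans_le (Finset.sum_le_univ_sum_of_nonneg hF)

variable [Fintype ι] [Fintype κ] [NormedAddCommGroup α]

theorem frobenius_norm_submatrix_le (hg : Function.Injective g) (M : Matrix κ κ α) :
    ‖M.submatrix g g‖ ≤ ‖M‖ := by
  rw [frobenius_norm_def, frobenius_norm_def]
  gcongr
  calc ∑ a, ∑ b, ‖M (g a) (g b)‖ ^ (2 : ℝ) ≤ ∑ a, ∑ k, ‖M (g a) k‖ ^ (2 : ℝ) := by
        gcongr with a
        exact Finset.sum_comp_le_sum_of_injective hg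
          (F := fun k => ‖M (g a) k‖ ^ (2 : ℝ)) (fun _ => by positivity) _
    _ ≤ ∑ i, ∑ k, ‖M i k‖ ^ (2 : ℝ) :=
        Finset.sum_comp_le_sum_of_injective hg
          (F := fun i => ∑ k, ‖M i k‖ ^ (2 : ℝ)) (fun _ => by positivity) _

theorem frobenius_norm_zeroExtend (hg : Function.Injective g) (w : Matrix ι ι α) :
    ‖zeroExtend g w‖ = ‖w‖ := by
  rw [frobenius_norm_def, frobenius_norm_def]
  congr 1
  refine (Fintype.sum_of_injective g hg _ _ (fun i hi => ?_) fun b => ?_).symm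
  · simp [zeroExtend_apply_eq_zero hg w (Or.inl hi)]
  · exact Fintype.sum_of_injective g hg _ _
      (fun k hk => by simp [zeroExtend_apply_eq_zero hg w (Or.inr hk)])
      fun c => by rw [zeroExtend_apply_apply hg]

end Submatrix

section Step

variable {p q : ℕ} {X : Set (MS p)} {a : MS p} {g : Fin q → Fin p}

theorem exists_posDef_image_submatrix_iff (hXh : ∀ x ∈ X, x.IsHermitian)
    (hXa : ∀ x ∈ X, ∀ t : ℝ, x + t • a ∈ X) (ha : a.PosSemidef) (hg : Function.Injective g)
    (ha_ker : ∀ v, v ⬝ᵥ a *ᵥ v = 0 → ∀ i ∉ Set.range g, v i = 0) :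
    (∃ u ∈ (fun x : MS p => x.submatrix g g) '' X, u.PosDef) ↔ ∃ u ∈ X, u.PosDef := by
  constructor
  · rintro ⟨_, ⟨x, hx, rfl⟩, hpd⟩
    obtain ⟨t, ht⟩ := exists_posDef_add_smul_of_posDef_submatrix (hXh x hx) ha hg ha_ker hpd
    exact ⟨_, hXa x hx t, ht⟩
  · rintro ⟨x, hx, hpd⟩
    exact ⟨_, ⟨x, hx, rfl⟩, hpd.submatrix hg⟩

theorem sdist_image_submatrix_eq_zero_iff (hX : X.Nonempty) (hXh : ∀ x ∈ X, x.IsHermitian)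
    (hXa : ∀ x ∈ X, ∀ t : ℝ, x + t • a ∈ X) (ha : a.PosSemidef) (hg : Function.Injective g)
    (ha_ker : ∀ v, v ⬝ᵥ a *ᵥ v = 0 → ∀ i ∉ Set.range g, v i = 0) :
    sdist (PSD q) ((fun x : MS p => x.submatrix g g) '' X) = 0 ↔ sdist (PSD p) X = 0 := by
  rw [sdist_eq_zero_iff ⟨0, .zero⟩ (hX.image _), sdist_eq_zero_iff ⟨0, .zero⟩ hX]
  constructor
  · intro h ε hε
    obtain ⟨δ, hδ, hδε⟩ := exists_pos_mul_lt (half_pos hε) ‖(1 : MS q)‖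
    obtain ⟨p₀, hp₀, _, ⟨x, hx, rfl⟩, hdist⟩ := h (ε / 2) (half_pos hε)
    -- Perturb `x` on the block `range g` so that this block becomes `p₀ + δ • 1 ≻ 0`.
    set w : MS q := p₀ - x.submatrix g g + δ • 1
    have hw : w.IsHermitian :=
      ((PosSemidef.isHermitian hp₀).sub ((hXh x hx).submatrix g)).add (PosDef.one.smul hδ).1
    have hwg : (x + zeroExtend g w).submatrix g g = p₀ + δ • 1 := by
      rw [submatrix_add, Pi.add_apply, Pi.add_apply, zeroExtend_submatrix hg]
      simp only [w]
      abel
    obtain ⟨t, ht⟩ := exists_posDef_add_smul_of_posDef_submatrix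
      ((hXh x hx).add (isHermitian_zeroExtend hw hg)) ha hg ha_ker
      (hwg ▸ PosDef.posSemidef_add hp₀ (PosDef.one.smul hδ))
    refine ⟨_, ht.posSemidef, x + t • a, hXa x hx t, ?_⟩
    calc dist (x + zeroExtend g w + t • a) (x + t • a) = ‖w‖ := by
          rw [dist_eq_norm, add_right_comm, add_sub_cancel_left,
            frobenius_norm_zeroExtend hg]
      _ ≤ ‖p₀ - x.submatrix g g‖ + δ * ‖(1 : MS q)‖ := by
          refine (norm_add_le _ _).trans ?_
          rw [norm_smul, Real.norm_of_nonneg hδ.le]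
      _ < ε := by rw [← dist_eq_norm]; linarith
  · intro h ε hε
    obtain ⟨u, hu, x, hx, hux⟩ := h ε hε
    refine ⟨u.submatrix g g, PosSemidef.submatrix hu g, _, ⟨x, hx, rfl⟩, ?_⟩
    rw [dist_eq_norm] at hux ⊢
    exact (frobenius_norm_submatrix_le hg (u - x)).trans_lt hux

theorem weakStatus_image_submatrix_iff (hX : X.Nonempty) (hXh : ∀ x ∈ X, x.IsHermitian)
    (hXa : ∀ x ∈ X, ∀ t : ℝ, x + t • a ∈ X) (ha : a.PosSemidef) (hg : Function.Injective g)
    (ha_ker : ∀ v, v ⬝ᵥ a *ᵥ v = 0 → ∀ i ∉ Set.range g, v i = 0) :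
    weakStatus ((fun x : MS p => x.submatrix g g) '' X) ↔ weakStatus X := by
  rw [weakStatus_iff, weakStatus_iff, sdist_image_submatrix_eq_zero_iff hX hXh hXa ha hg ha_ker,
    exists_posDef_image_submatrix_iff hXh hXa ha hg ha_ker]

end Step

section Blocks

variable {n j j' : ℕ}

def shiftIdx {q p : ℕ} (d : ℕ) (h : q + d ≤ p) (i : Fin q) : Fin p := ⟨d + i, by omega⟩

theorem shiftIdx_injective {q p d : ℕ} (h : q + d ≤ p) : Function.Injective (shiftIdx d h) :=
  fun i k hik => Fin.ext (by simpa [shiftIdx] using congrArg Fin.val hik)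

theorem mem_range_shiftIdx {q p d : ℕ} (h : q + d = p) {i : Fin p} (hi : d ≤ i) :
    i ∈ Set.range (shiftIdx d h.le) :=
  ⟨⟨i - d, by omega⟩, Fin.ext (by simp [shiftIdx]; omega)⟩

theorem blk_eq_submatrix {a b : ℕ} (h : b - a + a ≤ n) (x : MS n) :
    blk n a b x = x.submatrix (shiftIdx a h) (shiftIdx a h) := by
  ext i k
  simp [blk, shiftIdx, show a + i < n by omega, show a + k < n by omega]

theorem image_blk_zero {n : ℕ} (D : Set (MS n)) : blk n 0 n '' D = D := by
  have : blk n 0 n = id := by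
    funext x
    ext i k
    simp [blk]
  rw [this, Set.image_id]

theorem blk_eq_submatrix_castLE (h : j' - j ≤ n - j) (x : MS n) :
    blk n j j' x = (blk n j n x).submatrix (Fin.castLE h) (Fin.castLE h) :=
  rfl

theorem submatrix_blk_shiftIdx (hjj' : j ≤ j') (hj' : j' ≤ n) (h : n - j' + (j' - j) ≤ n - j)
    (x : MS n) :
    (blk n j n x).submatrix (shiftIdx (j' - j) h) (shiftIdx (j' - j) h) = blk n j' n x := by
  rw [blk_eq_submatrix (a := j) (b := n) (by omega),
    blk_eq_submatrix (a := j') (b := n) (by omega), submatrix_submatrix]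
  congr <;> ext i <;> simp [shiftIdx] <;> omega

def blkLinearMap (n a b : ℕ) : MS n →ₗ[ℝ] Matrix (Fin (b - a)) (Fin (b - a)) ℝ where
  toFun := blk n a b
  map_add' x y := by ext i k; simp only [blk, Matrix.add_apply]; split_ifs <;> simp
  map_smul' t x := by ext i k; simp only [blk, Matrix.smul_apply]; split_ifs <;> simp

theorem isHermitian_blk {a b : ℕ} {x : MS n} (hx : x.IsSymm) : (blk n a b x).IsHermitian := by
  refine IsHermitian.ext fun i k => ?_
  simp only [blk, star_trivial]
  split_ifs with hik hki hki
  · exact hx.apply _ _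
  · exact absurd ⟨hik.2, hik.1⟩ hki
  · exact absurd ⟨hki.2, hki.1⟩ hik
  · rfl

theorem staircase.dotProduct_mulVec_blk {a : MS n} (ha : staircase n j j' a)
    (h : j' - j ≤ n - j) (v : Fin (n - j) → ℝ) :
    v ⬝ᵥ blk n j n a *ᵥ v = (v ∘ Fin.castLE h) ⬝ᵥ blk n j j' a *ᵥ (v ∘ Fin.castLE h) := by
  rw [blk_eq_submatrix_castLE h, dotProduct_mulVec_submatrix (Fin.castLE_injective h)]
  intro i k hik
  rw [Fin.range_castLE, Set.mem_ofPred_eq, Set.mem_ofPred_eq] at hik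
  have : blk n j n a i k = 0 := by
    simp only [blk]
    split_ifs
    · exact ha.2 _ _ (by simp) (by simp) (by simp only; omega)
    · rfl
  simp [this]

theorem staircase.posSemidef_blk {a : MS n} (ha : staircase n j j' a) (has : a.IsSymm)
    (h : j' - j ≤ n - j) : (blk n j n a).PosSemidef :=
  .of_dotProduct_mulVec_nonneg (isHermitian_blk has) fun v => by
    simpa [ha.dotProduct_mulVec_blk h] using
      ha.1.posSemidef.dotProduct_mulVec_nonneg (v ∘ Fin.castLE h)

theorem staircase.eq_zero_of_dotProduct_mulVec_blk {a : MS n} (ha : staircase n j j' a)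
    (h : j' - j ≤ n - j) {v : Fin (n - j) → ℝ} (hv : v ⬝ᵥ blk n j n a *ᵥ v = 0)
    (i : Fin (n - j)) (hi : (i : ℕ) < j' - j) : v i = 0 := by
  rw [ha.dotProduct_mulVec_blk h] at hv
  have hv₀ : v ∘ Fin.castLE h = 0 := by
    by_contra hne
    simpa [hv] using ha.1.dotProduct_mulVec_pos hne
  simpa using congrFun hv₀ ⟨i, hi⟩

end Blocks

theorem weakStatus_image_blk_iff {n j j' : ℕ} (hjj' : j ≤ j') (hj' : j' ≤ n) {D : Set (MS n)}
    (hD : D.Nonempty) (hDs : ∀ x ∈ D, x.IsSymm) {a : MS n}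
    (hDa : ∀ x ∈ D, ∀ t : ℝ, x + t • a ∈ D) (has : a.IsSymm) (ha : staircase n j j' a) :
    weakStatus (blk n j' n '' D) ↔ weakStatus (blk n j n '' D) := by
  have h : n - j' + (j' - j) = n - j := by omega
  have himage : blk n j' n '' D = (fun y : MS (n - j) => y.submatrix (shiftIdx _ h.le)
      (shiftIdx _ h.le)) '' (blk n j n '' D) := by
    rw [Set.image_image]
    simp_rw [submatrix_blk_shiftIdx hjj' hj']
  rw [himage]
  refine weakStatus_image_submatrix_iff (hD.image _) ?_ ?_ (ha.posSemidef_blk has (by omega))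
    (shiftIdx_injective h.le) fun v hv i hi =>
      ha.eq_zero_of_dotProduct_mulVec_blk (by omega) hv i ?_
  · rintro _ ⟨x, hx, rfl⟩
    exact isHermitian_blk (hDs x hx)
  · rintro _ ⟨x, hx, rfl⟩ t
    refine ⟨x + t • a, hDa x hx t, ?_⟩
    show blkLinearMap n j n (x + t • a) = blkLinearMap n j n x + t • blkLinearMap n j n a
    rw [map_add, map_smul]
  · by_contra hle
    exact hi (mem_range_shiftIdx h (by omega))

section Cone

variable {E : Type*} [NormedAddCommGroup E] [NormedSpace ℝ E] {C : Set E}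

theorem infDist_smul_le_of_smul_subset (hCne : C.Nonempty) {s : ℝ} (hs : 0 < s)
    (hsC : s • C ⊆ C) (x : E) : Metric.infDist (s • x) C ≤ s * Metric.infDist x C :=
  calc Metric.infDist (s • x) C ≤ Metric.infDist (s • x) (s • C) :=
        Metric.infDist_le_infDist_of_subset hsC hCne.smul_set
    _ = s * Metric.infDist x C := by rw [infDist_smul₀ hs.ne', Real.norm_of_nonneg hs.le]

variable [FiniteDimensional ℝ E]

theorem exists_pos_mul_norm_le_infDist (hC : IsClosed C) (hCne : C.Nonempty)
    (hCcone : ∀ s : ℝ, 0 < s → s • C ⊆ C) {M : Submodule ℝ E} (hMC : ∀ u ∈ M, u ∈ C → u = 0) :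
    ∃ c₀ > 0, ∀ l ∈ M, c₀ * ‖l‖ ≤ Metric.infDist l C := by
  obtain ⟨c₀, hc₀, hS⟩ := ((isCompact_sphere (0 : E) 1).inter_left
    M.closed_of_finiteDimensional).exists_forall_le' (Metric.continuous_infDist_pt C).continuousOn
    (a := 0) fun u ⟨huM, hu⟩ => (hC.notMem_iff_infDist_pos hCne).1 fun huC => by
      simp [hMC u huM huC] at hu
  refine ⟨c₀, hc₀, fun l hl => ?_⟩
  rcases eq_or_ne l 0 with rfl | hl₀
  · simpa using Metric.infDist_nonneg
  · have hn : 0 < ‖l‖ := norm_pos_iff.2 hl₀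
    have := (hS (‖l‖⁻¹ • l) ⟨M.smul_mem _ hl, by simp [norm_smul, hl₀]⟩).trans
      (infDist_smul_le_of_smul_subset hCne (inv_pos.2 hn) (hCcone _ (inv_pos.2 hn)) l)
    rwa [le_inv_mul_iff₀ hn, mul_comm] at this

theorem exists_add_mem_of_infDist_lt (hC : IsClosed C) (hCne : C.Nonempty)
    (hCcone : ∀ s : ℝ, 0 < s → s • C ⊆ C) {M : Submodule ℝ E} (hMC : ∀ u ∈ M, u ∈ C → u = 0)
    {e : E} (h : ∀ ε > 0, ∃ l ∈ M, Metric.infDist (l + e) C < ε) : ∃ l ∈ M, l + e ∈ C := by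
  obtain ⟨c₀, hc₀, hc₀M⟩ := exists_pos_mul_norm_le_infDist hC hCne hCcone hMC
  -- Points `l ∈ M` with `l + e` at distance `< 1` from `C` lie in this compact set.
  set K := (M : Set E) ∩ Metric.closedBall 0 ((1 + ‖e‖) / c₀)
  have hK : IsCompact K := (isCompact_closedBall _ _).inter_left M.closed_of_finiteDimensional
  have hφ : Continuous fun l => Metric.infDist (l + e) C :=
    (Metric.continuous_infDist_pt C).comp (continuous_add_const e)
  have h₀ : (0 : ℝ) ∈ (fun l => Metric.infDist (l + e) C) '' K := by
    refine (hK.image hφ).isClosed.closure_subset (Metric.mem_closure_iff.2 fun ε hε => ?_)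
    obtain ⟨l, hl, hlε⟩ := h (min ε 1) (by positivity)
    refine ⟨_, ⟨l, ⟨hl, ?_⟩, rfl⟩, ?_⟩
    · have := hc₀M l hl
      have := Metric.infDist_le_infDist_add_dist (x := l) (y := l + e) (s := C)
      rw [dist_self_add_right] at this
      rw [mem_closedBall_zero_iff, le_div_iff₀ hc₀]
      linarith [min_le_right ε 1]
    · rw [dist_zero_left, Real.norm_of_nonneg Metric.infDist_nonneg]
      exact hlε.trans_le (min_le_left _ _)
  obtain ⟨l, ⟨hl, -⟩, hl₀⟩ := h₀
  exact ⟨l, hl, (hC.mem_iff_infDist_zero hCne).2 hl₀⟩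

end Cone

theorem isClosed_PSD (q : ℕ) : IsClosed (PSD q) := by
  have : PSD q = {x | xᴴ = x} ∩ ⋂ v : Fin q → ℝ, {x | 0 ≤ v ⬝ᵥ x *ᵥ v} := by
    ext x
    simp [PSD, posSemidef_iff_dotProduct_mulVec, IsHermitian]
  rw [this]
  exact (isClosed_eq (by fun_prop) continuous_id).inter
    (isClosed_iInter fun v => isClosed_le continuous_const (by fun_prop))

theorem weakStatus_image_iff_weaklyFeasible {n q : ℕ} (f : MS n →ₗ[ℝ] MS q)
    {L : Submodule ℝ (MS n)} (c : MS n)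
    (hmax : ∀ u ∈ f '' (L : Set (MS n)), u.PosSemidef → u = 0) :
    weakStatus (f '' affSet L c) ↔ weaklyFeasible (f '' affSet L c) := by
  refine ⟨fun hw => ?_, Or.inl⟩
  obtain ⟨hZ, hP⟩ := weakStatus_iff.1 hw
  refine ⟨?_, hP⟩
  have hnear : ∀ ε > 0, ∃ l ∈ L.map f, Metric.infDist (l + f c) (PSD q) < ε := by
    intro ε hε
    obtain ⟨u, hu, _, ⟨_, ⟨l, hl, rfl⟩, rfl⟩, hux⟩ :=
      (sdist_eq_zero_iff ⟨0, .zero⟩ (affSet_nonempty.image f)).1 hZ ε hε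
    exact ⟨f l, Submodule.mem_map_of_mem hl,
      (Metric.infDist_le_dist_of_mem hu).trans_lt (by rwa [dist_comm, ← map_add])⟩
  obtain ⟨_, hlM, hlc⟩ := exists_add_mem_of_infDist_lt (isClosed_PSD q) ⟨0, .zero⟩
    (fun s hs => by rintro _ ⟨x, hx, rfl⟩; exact PosSemidef.smul hx hs.le)
    (fun u hu => hmax u (by simpa using hu)) hnear
  obtain ⟨l, hl, rfl⟩ := Submodule.mem_map.1 hlM
  exact ⟨f (l + c), ⟨l + c, ⟨l, hl, rfl⟩, rfl⟩, by rwa [map_add]⟩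

theorem stmt11_general (n m : ℕ) (L : Submodule ℝ (MS n)) (hL : ∀ y ∈ L, y.IsSymm)
    (c : MS n) (hc : c.IsSymm)
    (k : ℕ → ℕ)
    (N : ℕ → ℕ) (hN0 : N 0 = 0) (hNsucc : ∀ i, N (i + 1) = N i + k i)
    (hNm : N m ≤ n)
    (A : ℕ → MS n) (hAL : ∀ i < m, A i ∈ L)
    (hstair : ∀ i < m, staircase n (N i) (N (i + 1)) (A i))
    (hmax : ∀ u ∈ blk n (N m) n '' (L : Set (MS n)), u.PosSemidef → u = 0) :
    weakStatus (affSet L c) ↔ weaklyFeasible (blk n (N m) n '' affSet L c) := by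
  have hN : Monotone N := monotone_nat_of_le_succ fun i => by rw [hNsucc]; omega
  have hchain : ∀ i ≤ m,
      weakStatus (blk n (N i) n '' affSet L c) ↔ weakStatus (affSet L c) := by
    intro i hi
    induction i with
    | zero => rw [hN0, image_blk_zero]
    | succ i ih =>
      rw [← ih (by omega)]
      exact weakStatus_image_blk_iff (hN i.le_succ) ((hN hi).trans hNm) affSet_nonempty
        (fun x => isSymm_of_mem_affSet hL hc) (fun x hx => add_smul_mem_affSet (hAL i hi) hx)
        (hL _ (hAL i hi)) (hstair i hi)
  rw [← hchain m le_rfl]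
  exact weakStatus_image_iff_weaklyFeasible (blkLinearMap n (N m) n) c hmax

/-- Given a maximal hyper feasible partition `A 0, …, A (m−1) ∈ L` in staircase
shape (maximality: the only positive semidefinite matrix in `π̄_{N m}(L)` is zero),
`(K_n, L, c)` is in weak status iff the subproblem
`(K_{n−N m}, π̄_{N m}(L), π̄_{N m}(c))`, whose affine feasible set is
`π̄_{N m}(L + c)`, is weakly feasible. -/
theorem stmt11 (n m : ℕ) (L : Submodule ℝ (MS n)) (hL : ∀ y ∈ L, y.IsSymm)
    (c : MS n) (hc : c.IsSymm)
    (k : ℕ → ℕ) (hk : ∀ i < m, 0 < k i)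
    (N : ℕ → ℕ) (hN0 : N 0 = 0) (hNsucc : ∀ i, N (i + 1) = N i + k i)
    (hNm : N m ≤ n)
    (A : ℕ → MS n) (hAL : ∀ i < m, A i ∈ L)
    (hstair : ∀ i < m, staircase n (N i) (N (i + 1)) (A i))
    (hmax : ∀ u ∈ blk n (N m) n '' (L : Set (MS n)), u.PosSemidef → u = 0) :
    weakStatus (affSet L c) ↔ weaklyFeasible (blk n (N m) n '' affSet L c) :=
  stmt11_general n m L hL c hc k N hN0 hNsucc hNm A hAL hstair hmax
end
end

section
/- Let L ⊆ S_n be a linear subspace. Then L ∩ K_n = {0} (i.e. the zero matrix is the only positive semidefinite matrix in L) if and only if the orthogonal complement L^⊥ (with respect to the trace inner product) contains a positive definite matrix. -/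
/-!
If `y` is positive definite and `x` positive semidefinite, then
`tr (y x) = ‖y^{1/2} x^{1/2}‖²` in the Frobenius norm, and `y^{1/2}` is invertible, so
`tr (y x) = 0` forces `x = 0`.

Conversely, if `L` meets the positive semidefinite cone only in `0`, then `L` is disjoint from
the compact convex base `{x ⪰ 0 | tr x = 1}` of the cone. Strict separation gives a functional
`tr (y ·)` that vanishes on `L` and is positive on the base, hence on every nonzero positive
semidefinite matrix. On symmetric matrices `y + yᵀ` defines twice the same functional, and
`vᵀ (y + yᵀ) v = 2 tr (y vvᵀ) > 0` for `v ≠ 0`.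
-/

open Matrix

noncomputable section

open scoped ComplexOrder

theorem LinearMap.eq_zero_of_forall_lt_apply {𝕜 M : Type*} [Field 𝕜] [LinearOrder 𝕜]
    [AddCommGroup M] [Module 𝕜 M] (f : M →ₗ[𝕜] 𝕜) (p : Submodule 𝕜 M) {c : 𝕜}
    (h : ∀ x ∈ p, c < f x) {x : M} (hx : x ∈ p) : f x = 0 := by
  by_contra hfx
  have := h _ (p.smul_mem (c / f x) hx)
  rw [map_smul, smul_eq_mul, div_mul_cancel₀ c hfx] at this
  exact this.false

namespace Matrix

theorem exists_trace_mul_eq {n R : Type*} [Fintype n] [DecidableEq n] [CommSemiring R]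
    (f : Matrix n n R →ₗ[R] R) : ∃ y : Matrix n n R, ∀ x, (y * x).trace = f x := by
  refine ⟨of fun i j => f (single j i 1), fun x => ?_⟩
  induction x using Matrix.induction_on' with
  | h_zero => simp
  | h_add p q hp hq => rw [mul_add, trace_add, hp, hq, map_add]
  | h_std_basis i j c =>
    rw [trace_mul_single, of_apply, ← mul_one c, ← smul_eq_mul c 1, ← smul_single, map_smul]
    simp [mul_comm]

theorem trace_transpose_mul_of_isSymm {n R : Type*} [Fintype n] [CommSemiring R]
    (y : Matrix n n R) {x : Matrix n n R} (hx : x.IsSymm) : (yᵀ * x).trace = (y * x).trace := by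
  rw [← trace_transpose, transpose_mul, transpose_transpose, hx.eq, trace_mul_comm]

variable {n : Type*} [Fintype n]

theorem PosDef.eq_zero_of_trace_mul_eq_zero {𝕜 : Type*} [RCLike 𝕜] [DecidableEq n]
    {y x : Matrix n n 𝕜} (hy : y.PosDef) (hx : x.PosSemidef) (h : (y * x).trace = 0) :
    x = 0 := by
  open scoped MatrixOrder in
  set S := CFC.sqrt x
  set T := CFC.sqrt y
  have hSS : S * S = x := CFC.sqrt_mul_sqrt_self x hx.nonneg
  have hTT : T * T = y := CFC.sqrt_mul_sqrt_self y hy.posSemidef.nonneg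
  have hS : Sᴴ = S := (CFC.sqrt_nonneg x).posSemidef.isHermitian
  have hT : Tᴴ = T := (CFC.sqrt_nonneg y).posSemidef.isHermitian
  have hTS : T * S = 0 := by
    rw [← trace_conjTranspose_mul_self_eq_zero_iff, conjTranspose_mul, hS, hT, mul_assoc,
      trace_mul_comm, ← h, ← hSS, ← hTT]
    simp only [mul_assoc]
  have hT_unit : IsUnit T := (CFC.isUnit_sqrt_iff y hy.posSemidef.nonneg).mpr hy.isUnit
  rw [← hSS, hT_unit.mul_right_eq_zero.mp hTS, zero_mul]

theorem PosSemidef.abs_apply_le_trace {x : Matrix n n ℝ} (hx : x.PosSemidef) (i j : n) :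
    |x i j| ≤ x.trace := by
  have hdiag : ∀ k, x k k ≤ x.trace := fun k =>
    Finset.single_le_sum (f := fun l => x l l) (fun l _ => hx.diag_nonneg) (Finset.mem_univ k)
  have hsymm : x j i = x i j := by simpa using hx.isHermitian.apply i j
  have hminor : x i j * x j i ≤ x i i * x j j := by
    have := (hx.submatrix ![i, j]).det_nonneg
    rw [det_fin_two] at this
    simp only [submatrix_apply, Matrix.cons_val_zero, Matrix.cons_val_one] at this
    linarith
  refine abs_le_of_sq_le_sq ?_ hx.trace_nonneg
  rw [hsymm] at hminor
  nlinarith [hx.diag_nonneg (i := i), hx.diag_nonneg (i := j), hdiag i, hdiag j]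

theorem isClosed_setOf_posSemidef : IsClosed {x : Matrix n n ℝ | x.PosSemidef} := by
  simp only [posSemidef_iff_dotProduct_mulVec, Set.ofPred_and, Set.ofPred_forall]
  exact (isClosed_eq (by fun_prop) continuous_id).inter
    (isClosed_iInter fun v => isClosed_le continuous_const (by fun_prop))

theorem isCompact_setOf_posSemidef_trace_eq_one :
    IsCompact {x : Matrix n n ℝ | x.PosSemidef ∧ x.trace = 1} := by
  refine (isCompact_univ_pi fun _ => isCompact_univ_pi fun _ =>
    isCompact_Icc (a := (-1 : ℝ)) (b := 1)).of_isClosed_subset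
    (isClosed_setOf_posSemidef.inter (isClosed_eq (by fun_prop) continuous_const)) ?_
  rintro x ⟨hx, htr⟩ i - j -
  exact abs_le.mp (htr ▸ hx.abs_apply_le_trace i j)

theorem convex_setOf_posSemidef_trace_eq_one :
    Convex ℝ {x : Matrix n n ℝ | x.PosSemidef ∧ x.trace = 1} := by
  rintro x ⟨hx, hxt⟩ z ⟨hz, hzt⟩ a b ha hb hab
  exact ⟨(hx.smul ha).add (hz.smul hb), by simp [hxt, hzt, hab]⟩

theorem exists_trace_mul_pos_of_forall_posSemidef_eq_zero (L : Submodule ℝ (Matrix n n ℝ))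
    (hL : ∀ x ∈ L, x.PosSemidef → x = 0) :
    ∃ y : Matrix n n ℝ, (∀ l ∈ L, (y * l).trace = 0) ∧
      ∀ x : Matrix n n ℝ, x.PosSemidef → x ≠ 0 → 0 < (y * x).trace := by
  classical
  have hdisj : Disjoint {x : Matrix n n ℝ | x.PosSemidef ∧ x.trace = 1} L := by
    refine Set.disjoint_left.mpr fun x ⟨hx, htr⟩ hxL => ?_
    simp [hL x hxL hx] at htr
  -- `Matrix n n ℝ` is not unfolded to a product during instance search
  have : LocallyConvexSpace ℝ (Matrix n n ℝ) := Pi.locallyConvexSpace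
  obtain ⟨f, u, v, hfu, huv, hvf⟩ := geometric_hahn_banach_compact_closed
    convex_setOf_posSemidef_trace_eq_one isCompact_setOf_posSemidef_trace_eq_one L.convex
    L.closed_of_finiteDimensional hdisj
  obtain ⟨y, hy⟩ := exists_trace_mul_eq (-f.toLinearMap)
  have hfL : ∀ l ∈ L, f l = 0 := fun l hl =>
    LinearMap.eq_zero_of_forall_lt_apply f.toLinearMap L hvf hl
  have hv : v < 0 := by simpa using hvf 0 L.zero_mem
  refine ⟨y, fun l hl => by simp [hy, hfL l hl], fun x hx hx0 => ?_⟩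
  have htr : 0 < x.trace := hx.trace_nonneg.lt_of_ne' (hx.trace_eq_zero_iff.not.mpr hx0)
  have hnorm : (x.trace⁻¹ • x).PosSemidef ∧ (x.trace⁻¹ • x).trace = 1 :=
    ⟨hx.smul (inv_nonneg.mpr htr.le), by rw [trace_smul, smul_eq_mul, inv_mul_cancel₀ htr.ne']⟩
  have hfx : x.trace⁻¹ * f x < 0 := by
    simpa using (hfu _ hnorm).trans (huv.trans hv)
  rw [hy, LinearMap.neg_apply, ContinuousLinearMap.coe_coe, neg_pos]
  exact neg_of_mul_neg_right hfx (inv_nonneg.mpr htr.le)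

end Matrix

/-- For a linear subspace `L` of the symmetric `n×n` matrices, the zero matrix is the
only positive semidefinite matrix in `L` if and only if the orthogonal complement
`L^⊥` of `L` in `S_n` (w.r.t. the trace inner product `⟨y, x⟩ = tr(yx)`) contains
a positive definite matrix. -/
theorem stmt12 (n : ℕ) (L : Submodule ℝ (MS n)) (hL : ∀ x ∈ L, x.IsSymm) :
    (∀ x ∈ L, x.PosSemidef → x = 0) ↔
      ∃ y : MS n, y.IsSymm ∧ (∀ l ∈ L, (y * l).trace = 0) ∧ y.PosDef := by
  constructor
  · intro h
    obtain ⟨y, hyL, hy_pos⟩ := exists_trace_mul_pos_of_forall_posSemidef_eq_zero L h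
    have hsymm_trace : ∀ x : MS n, x.IsSymm → ((y + yᵀ) * x).trace = 2 * (y * x).trace :=
      fun x hx => by rw [add_mul, trace_add, trace_transpose_mul_of_isSymm y hx, two_mul]
    refine ⟨y + yᵀ, by simp [IsSymm, add_comm],
      fun l hl => by simp [hsymm_trace l (hL l hl), hyL l hl], ?_⟩
    refine posDef_iff_dotProduct_mulVec.mpr ⟨by simp [IsHermitian, add_comm], fun v hv => ?_⟩
    have hvv : (vecMulVec v (star v)).IsSymm := by ext i j; simp [vecMulVec_apply, mul_comm]
    have hquad := hsymm_trace _ hvv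
    rw [mul_vecMulVec, trace_vecMulVec, dotProduct_comm] at hquad
    rw [hquad]
    exact mul_pos two_pos (hy_pos _ (posSemidef_vecMulVec_self_star v) (by simpa using hv))
  · rintro ⟨y, -, hyL, hy⟩ x hxL hx
    exact hy.eq_zero_of_trace_mul_eq_zero hx (hyL x hxL)
end
end

section
/- Let L ⊆ S_n be a linear subspace, c ∈ S_n, 0 < k and 0 ≤ l < n−k. Assume: (1) the subproblem π̄_k(K_n,L,c) is weakly feasible, i.e. π̄_k(L+c) contains a positive semidefinite matrix but no positive definite matrix; and (2) every positive semidefinite matrix in π̄_k(L+c) has the block form [[A, 0],[0, 0]] with A an l×l positive semidefinite matrix. Suppose E ∩ (L+c) ≠ ∅, where E = {x ∈ S_n : all entries of x outside the upper-left (k+l)×(k+l) block vanish}. Then (L+c) ∩ K_n ≠ ∅ if and only if there exists x ∈ E ∩ (L+c) whose upper-left (k+l)×(k+l) block π_{k+l}(x) is positive semidefinite. -/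
open Matrix

attribute [local instance] Matrix.frobeniusNormedAddCommGroup

noncomputable section

/-- `E`: the set of `n×n` matrices all of whose entries outside the upper-left
`j×j` block vanish. -/
def upperLeftSupported (n j : ℕ) : Set (MS n) :=
  {x | ∀ i i' : Fin n, (j ≤ i.1 ∨ j ≤ i'.1) → x i i' = 0}

/-! A positive semidefinite matrix with a zero diagonal entry has the whole row and column of
that entry zero, its `2×2` principal minors being nonnegative. So if `x ∈ (L + c) ∩ K_n`, then
`π̄_k(x)` is a positive semidefinite point of `π̄_k(L + c)`, whose diagonal vanishes from index
`l` on by the face hypothesis; hence `x` is supported on the upper-left `(k+l)×(k+l)` block.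
Conversely, the quadratic form of a matrix supported on a principal block only sees that block. -/

namespace Matrix

section RCLike

open scoped ComplexOrder

variable {ι 𝕜 : Type*} [RCLike 𝕜] {M : Matrix ι ι 𝕜}

theorem PosSemidef.apply_eq_zero_of_apply_self_eq_zero (hM : M.PosSemidef) {i : ι}
    (hi : M i i = 0) (j : ι) : M i j = 0 := by
  classical
  have hdet := (hM.submatrix ![i, j]).det_nonneg
  have hji : M j i = star (M i j) := by simpa using (hM.isHermitian.apply j i).symm
  rw [det_fin_two] at hdet
  simp only [submatrix_apply, Matrix.cons_val_zero, Matrix.cons_val_one, hi, zero_mul, zero_sub,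
    hji, RCLike.star_def, RCLike.mul_conj] at hdet
  have hsq : ‖M i j‖ ^ 2 ≤ 0 := by exact_mod_cast neg_nonneg.1 hdet
  simpa using hsq

theorem PosSemidef.apply_eq_zero_of_notMem (hM : M.PosSemidef) {s : Set ι}
    (hs : ∀ i ∉ s, M i i = 0) {i j : ι} (hij : i ∉ s ∨ j ∉ s) : M i j = 0 := by
  rcases hij with hi | hj
  · exact hM.apply_eq_zero_of_apply_self_eq_zero (hs i hi) j
  · rw [← hM.isHermitian.apply, hM.apply_eq_zero_of_apply_self_eq_zero (hs j hj) i, star_zero]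

end RCLike

theorem submatrix_mulVec_comp {ι κ m l R : Type*} [Fintype ι] [Fintype κ]
    [NonUnitalNonAssocSemiring R] {e : ι → κ} (he : Function.Injective e) {M : Matrix m κ R}
    (hM : ∀ i, ∀ j ∉ Set.range e, M i j = 0) (f : l → m) (v : κ → R) (i : l) :
    (M.submatrix f e *ᵥ (v ∘ e)) i = (M *ᵥ v) (f i) :=
  Fintype.sum_of_injective e he _ _ (fun j hj => by simp [hM _ j hj]) fun _ => rfl

variable {ι κ R : Type*} [Fintype ι] [Fintype κ] [Ring R] [PartialOrder R] [StarRing R]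

theorem posSemidef_of_posSemidef_submatrix {e : ι → κ} (he : Function.Injective e)
    {M : Matrix κ κ R} (hM : ∀ i j, (i ∉ Set.range e ∨ j ∉ Set.range e) → M i j = 0)
    (hsub : (M.submatrix e e).PosSemidef) : M.PosSemidef := by
  refine .of_dotProduct_mulVec_nonneg ?_ fun v => ?_
  · ext i j
    by_cases hij : i ∈ Set.range e ∧ j ∈ Set.range e
    · obtain ⟨⟨a, rfl⟩, ⟨b, rfl⟩⟩ := hij
      exact hsub.isHermitian.apply a b
    · rw [not_and_or] at hij
      rw [conjTranspose_apply, hM i j hij, hM j i hij.symm, star_zero]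
  · have hquad : star (v ∘ e) ⬝ᵥ (M.submatrix e e *ᵥ (v ∘ e)) = star v ⬝ᵥ (M *ᵥ v) := by
      refine Fintype.sum_of_injective e he _ _ (fun i hi => ?_) fun i => ?_
      · simp [mulVec, dotProduct, hM i _ (Or.inl hi)]
      · rw [submatrix_mulVec_comp he (fun i j hj => hM i j (Or.inr hj))]
        rfl
    exact hquad ▸ hsub.dotProduct_mulVec_nonneg _

end Matrix

theorem blk_apply_sub {n a b : ℕ} (x : MS n) {i j : Fin n} (hai : a ≤ i) (haj : a ≤ j)
    (hib : i < b) (hjb : j < b) :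
    blk n a b x ⟨i - a, by omega⟩ ⟨j - a, by omega⟩ = x i j := by
  have hi : a + (i - a) = i := by omega
  have hj : a + (j - a) = j := by omega
  simp only [blk, hi, hj, Fin.is_lt, and_self, dif_pos]

theorem posSemidef_blk {n b : ℕ} {x : MS n} (hx : x.PosSemidef) (a : ℕ) (hb : b ≤ n) :
    (blk n a b x).PosSemidef := by
  let e : Fin (b - a) → Fin n := fun i => ⟨a + i, by have := i.2; omega⟩
  have hsub : blk n a b x = x.submatrix e e := by
    ext i j
    have := i.2
    have := j.2
    rw [blk, dif_pos ⟨by omega, by omega⟩]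
    rfl
  exact hsub ▸ hx.submatrix e

theorem blk_zero_eq_submatrix {n m : ℕ} (h : m ≤ n) (x : MS n) :
    blk n 0 m x = x.submatrix (Fin.castLE h) (Fin.castLE h) := by
  ext i j
  simp [blk, Fin.castLE, i.2.trans_le h, j.2.trans_le h]

theorem mem_upperLeftSupported_iff {n m : ℕ} (h : m ≤ n) {x : MS n} :
    x ∈ upperLeftSupported n m ↔
      ∀ i j, (i ∉ Set.range (Fin.castLE h) ∨ j ∉ Set.range (Fin.castLE h)) → x i j = 0 := by
  simp [upperLeftSupported, Fin.range_castLE]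

theorem stmt18_general (n k l : ℕ) (hl : k + l < n)
    (L : Submodule ℝ (MS n)) (c : MS n)
    (hface : ∀ u ∈ blk n k n '' affSet L c, u.PosSemidef →
      (blk (n - k) 0 l u).PosSemidef ∧
        ∀ i j : Fin (n - k), (l ≤ i.1 ∨ l ≤ j.1) → u i j = 0) :
    (∃ x ∈ affSet L c, x.PosSemidef) ↔
      ∃ x ∈ upperLeftSupported n (k + l) ∩ affSet L c,
        (blk n 0 (k + l) x).PosSemidef := by
  have hm : k + l ≤ n := hl.le
  constructor
  · rintro ⟨x, hx, hpsd⟩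
    have hdiag : ∀ i ∉ Set.range (Fin.castLE hm), x i i = 0 := by
      intro i hi
      simp only [Fin.range_castLE, Set.mem_ofPred_eq, not_lt] at hi
      have hzero := (hface _ ⟨x, hx, rfl⟩ (posSemidef_blk hpsd k le_rfl)).2
        ⟨i - k, by omega⟩ ⟨i - k, by omega⟩ (Or.inl (show l ≤ i.1 - k by omega))
      rwa [blk_apply_sub x (by omega) (by omega) i.2 i.2] at hzero
    have hsupp : x ∈ upperLeftSupported n (k + l) :=
      (mem_upperLeftSupported_iff hm).2 fun _ _ => hpsd.apply_eq_zero_of_notMem hdiag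
    exact ⟨x, ⟨hsupp, hx⟩, posSemidef_blk hpsd 0 hm⟩
  · rintro ⟨x, ⟨hsupp, hx⟩, hblk⟩
    rw [blk_zero_eq_submatrix hm] at hblk
    exact ⟨x, hx, posSemidef_of_posSemidef_submatrix (Fin.castLE_injective hm)
      ((mem_upperLeftSupported_iff hm).1 hsupp) hblk⟩

/-- Assume: (1) the subproblem `π̄_k(K_n, L, c)`, with affine feasible set `π̄_k(L+c)`,
is weakly feasible (contains a positive semidefinite but no positive definite matrix);
(2) every positive semidefinite matrix in `π̄_k(L+c)` has the block form
`[[A, 0], [0, 0]]` with `A` an `l×l` positive semidefinite matrix. If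
`E ∩ (L+c) ≠ ∅`, where `E` consists of the matrices supported on the upper-left
`(k+l)×(k+l)` block, then `(L+c) ∩ K_n ≠ ∅` iff some `x ∈ E ∩ (L+c)` has positive
semidefinite upper-left `(k+l)×(k+l)` block `π_{k+l}(x)`. -/
theorem stmt18 (n k l : ℕ) (hk : 0 < k) (hl : k + l < n)
    (L : Submodule ℝ (MS n)) (hL : ∀ y ∈ L, y.IsSymm) (c : MS n) (hc : c.IsSymm)
    (hfeas : ∃ u ∈ blk n k n '' affSet L c, u.PosSemidef)
    (hnotstrict : ¬ ∃ u ∈ blk n k n '' affSet L c, u.PosDef)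
    (hface : ∀ u ∈ blk n k n '' affSet L c, u.PosSemidef →
      (blk (n - k) 0 l u).PosSemidef ∧
        ∀ i j : Fin (n - k), (l ≤ i.1 ∨ l ≤ j.1) → u i j = 0)
    (hE : (upperLeftSupported n (k + l) ∩ affSet L c).Nonempty) :
    (∃ x ∈ affSet L c, x.PosSemidef) ↔
      ∃ x ∈ upperLeftSupported n (k + l) ∩ affSet L c,
        (blk n 0 (k + l) x).PosSemidef :=
  stmt18_general n k l hl L c hface
end
end
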